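/- arXiv:0909.3520 — 2 statements merged into one kernel-verified Lean document; each statement's English description precedes it below -/
import Mathlib

section
/- The 3-peg Hanoi Towers group H^{(3)} ≤ Aut(X_3^*), generated by {a_{01}, a_{02}, a_{12}}, is contracting, and its nucleus is {1, a_{01}, a_{02}, a_{12}}. -/
/-!
Common framework: automorphisms of the rooted tree `X_k^*`, root permutations,
sections, self-similar and contracting groups, Hanoi automorphisms and Hanoi
groups, following Makisumi–Stadnyk–Steinhurst, "Modified Hanoi Towers Groups
and Limit Spaces".

A word `x_n … x_1` over the alphabet `X_k = Fin k` is encoded as the list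
`[x_n, …, x_1]`, whose head `x_n` is the first letter, i.e. the letter that a
tree automorphism reads (and permutes) first.
-/

namespace Hanoi

/-- Words over the alphabet `X_k = Fin k`. -/
abbrev Word (k : ℕ) := List (Fin k)

/-- `e` is an automorphism of the rooted tree `X_k^*`: it fixes the root
(the empty word), preserves word length (levels) and preserves the tree
structure (words sharing an initial segment of length `n` are sent to words
sharing an initial segment of length `n`). -/
def IsTreeAut {k : ℕ} (e : Equiv.Perm (Word k)) : Prop :=
  (∀ w : Word k, (e w).length = w.length) ∧
    ∀ (w v : Word k) (n : ℕ), w.take n = v.take n → (e w).take n = (e v).take n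

open Classical in
/-- The root permutation `σ_e` of a tree automorphism `e` (its action on
one-letter words). -/
noncomputable def rootPerm {k : ℕ} (e : Equiv.Perm (Word k)) : Equiv.Perm (Fin k) :=
  if h : Function.Bijective (fun x : Fin k => ((e [x]).head?.getD x)) then
    Equiv.ofBijective _ h
  else 1

open Classical in
/-- The section `e|_x` of `e` at a letter `x`: the unique automorphism with
`e (x :: w) = σ_e x :: (e|_x) w` for all words `w`. -/
noncomputable def sec {k : ℕ} (e : Equiv.Perm (Word k)) (x : Fin k) : Equiv.Perm (Word k) :=
  if h : Function.Bijective (fun w : Word k => (e (x :: w)).tail) then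
    Equiv.ofBijective _ h
  else 1

/-- The section `e|_v` of `e` at a word `v = x_n … x_1`, defined by
`e|_v = (e|_{x_n})|_{x_{n-1} … x_1}`. -/
noncomputable def secW {k : ℕ} (e : Equiv.Perm (Word k)) : Word k → Equiv.Perm (Word k)
  | [] => e
  | x :: v => secW (sec e x) v

/-- A subgroup of the permutations of `X_k^*` is self-similar if it consists of
tree automorphisms and is closed under taking sections. -/
def IsSelfSimilar {k : ℕ} (G : Subgroup (Equiv.Perm (Word k))) : Prop :=
  (∀ g ∈ G, IsTreeAut g) ∧ ∀ g ∈ G, ∀ x : Fin k, sec g x ∈ G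

/-- A self-similar group `G` is contracting if there is a finite subset `N ⊆ G`
such that for every `g ∈ G` all sections of `g` at words of length at least
some `m` lie in `N`. -/
def IsContracting {k : ℕ} (G : Subgroup (Equiv.Perm (Word k))) : Prop :=
  ∃ N : Set (Equiv.Perm (Word k)), N.Finite ∧ N ⊆ (G : Set (Equiv.Perm (Word k))) ∧
    ∀ g ∈ G, ∃ m : ℕ, ∀ v : Word k, m ≤ v.length → secW g v ∈ N

/-- `N` is the nucleus of `G`: a smallest finite subset of `G` catching all
deep enough sections of every element of `G`. -/
def IsNucleus {k : ℕ} (G : Subgroup (Equiv.Perm (Word k)))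
    (N : Set (Equiv.Perm (Word k))) : Prop :=
  (N.Finite ∧ N ⊆ (G : Set (Equiv.Perm (Word k))) ∧
    ∀ g ∈ G, ∃ m : ℕ, ∀ v : Word k, m ≤ v.length → secW g v ∈ N) ∧
  ∀ N' : Set (Equiv.Perm (Word k)), N'.Finite → N' ⊆ (G : Set (Equiv.Perm (Word k))) →
    (∀ g ∈ G, ∃ m : ℕ, ∀ v : Word k, m ≤ v.length → secW g v ∈ N') → N ⊆ N'

/-- `a` is a Hanoi automorphism with set of inactive pegs `Q`: the section at
each active peg (element of the complement of `Q`) is trivial, the section at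
each inactive peg is `a` itself, and the root permutation fixes each inactive
peg. -/
def IsHanoiWith {k : ℕ} (a : Equiv.Perm (Word k)) (Q : Set (Fin k)) : Prop :=
  IsTreeAut a ∧ (∀ i ∉ Q, sec a i = 1) ∧ (∀ j ∈ Q, sec a j = a) ∧
    ∀ j ∈ Q, rootPerm a j = j

/-- `a` is a `k`-peg Hanoi automorphism. -/
def IsHanoiAut {k : ℕ} (a : Equiv.Perm (Word k)) : Prop := ∃ Q, IsHanoiWith a Q

open Classical in
/-- The set `Q_a` of inactive pegs of a Hanoi automorphism `a`; by convention
`Q_1 = X_k` (for `a ≠ 1` the set of inactive pegs is uniquely determined). -/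
noncomputable def inactivePegs {k : ℕ} (a : Equiv.Perm (Word k)) : Set (Fin k) :=
  if a = 1 then Set.univ
  else if h : ∃ Q, IsHanoiWith a Q then h.choose else ∅

/-- `S_{k,q}`: the set of Hanoi automorphisms over `X_k` with exactly `q`
inactive pegs. -/
noncomputable def hanoiSet (k q : ℕ) : Set (Equiv.Perm (Word k)) :=
  {a | IsHanoiAut a ∧ (inactivePegs a).ncard = q}

/-- `L = [s_n, …, s_1]` is a representation of `g` over the generating set `S`:
each `s_i ∈ S ∪ S⁻¹` and `g = s_n ⋯ s_2 s_1`. -/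
def IsRepOf {k : ℕ} (S : Set (Equiv.Perm (Word k))) (L : List (Equiv.Perm (Word k)))
    (g : Equiv.Perm (Word k)) : Prop :=
  (∀ s ∈ L, s ∈ S ∨ s⁻¹ ∈ S) ∧ L.prod = g

/-- The length `l(g)` of `g` with respect to `S`: the length of a minimal
representation (`0` for the identity). -/
noncomputable def repLength {k : ℕ} (S : Set (Equiv.Perm (Word k)))
    (g : Equiv.Perm (Word k)) : ℕ :=
  sInf {n | ∃ L, IsRepOf S L g ∧ L.length = n}

/-- The essential set of a representation: the intersection of the sets of
inactive pegs of its letters. -/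
noncomputable def essSet {k : ℕ} (L : List (Equiv.Perm (Word k))) : Set (Fin k) :=
  ⋂ s ∈ L, inactivePegs s

/-- The prenucleus of `G`: the set of elements `g ∈ G` with `g|_j = g` for some
letter `j`. -/
noncomputable def preNucleus {k : ℕ} (G : Subgroup (Equiv.Perm (Word k))) :
    Set (Equiv.Perm (Word k)) :=
  {g | g ∈ G ∧ ∃ j : Fin k, sec g j = g}

/-- The underlying function of the Hanoi Towers move `a_{ij}`: it changes the
first occurrence of `i` or `j` in a word by means of the transposition `(i j)`
and leaves the rest of the word unchanged. -/
def hanoiMoveFun {k : ℕ} (i j : Fin k) : Word k → Word k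
  | [] => []
  | x :: w => if x = i ∨ x = j then Equiv.swap i j x :: w else x :: hanoiMoveFun i j w

theorem hanoiMoveFun_involutive {k : ℕ} (i j : Fin k) :
    Function.Involutive (hanoiMoveFun i j) := by
  intro w
  induction w with
  | nil => rfl
  | cons x t ih =>
    by_cases h : x = i ∨ x = j
    · have h2 : Equiv.swap i j x = i ∨ Equiv.swap i j x = j := by
        rcases h with h | h <;> subst h <;> simp
      simp only [hanoiMoveFun, if_pos h, if_pos h2, Equiv.swap_apply_self]
    · simp only [hanoiMoveFun, if_neg h, ih]

/-- The Hanoi Towers move `a_{ij}`, as a permutation of `X_k^*`: its root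
permutation is the transposition `(i j)`, its sections at `i` and `j` are
trivial and all its other sections equal `a_{ij}` itself. -/
def hanoiMove {k : ℕ} (i j : Fin k) : Equiv.Perm (Word k) :=
  (hanoiMoveFun_involutive i j).toPerm

/-- The orbit of the letter `j` under the subgroup of `Sym(X_k)` generated by
the root permutations of the elements of `T`. -/
noncomputable def orbT {k : ℕ} (T : Finset (Equiv.Perm (Word k))) (j : Fin k) : Set (Fin k) :=
  MulAction.orbit (Subgroup.closure ((fun a => rootPerm a) '' (T : Set (Equiv.Perm (Word k))))) j

/-- The set `Fix(T)` of letters fixed by the root permutation of every element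
of `T`. -/
noncomputable def fixT {k : ℕ} (T : Finset (Equiv.Perm (Word k))) : Set (Fin k) :=
  {x | ∀ s ∈ T, rootPerm s x = x}

/-- Condition (*) on a generating set `S` of Hanoi automorphisms: for every
finite `T ⊆ S` with nonempty essential set and every letter `j ∉ Fix(T)`,
the orbit of `j` misses the inactive pegs of some element of `T`. -/
noncomputable def CondStar {k : ℕ} (S : Set (Equiv.Perm (Word k))) : Prop :=
  ∀ T : Finset (Equiv.Perm (Word k)), (T : Set (Equiv.Perm (Word k))) ⊆ S →
    (⋂ s ∈ T, inactivePegs s).Nonempty →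
    ∀ j : Fin k, j ∉ fixT T →
      ∃ s ∈ T, orbT T j ∩ inactivePegs s = ∅

open Classical in
/-- `d(g)`: the least number of distinct generators occurring among all
representations of `g` having nonempty essential set. -/
noncomputable def dCount {k : ℕ} (S : Set (Equiv.Perm (Word k)))
    (g : Equiv.Perm (Word k)) : ℕ :=
  sInf {M | ∃ L, IsRepOf S L g ∧ (essSet L).Nonempty ∧ L.toFinset.card = M}

/-- `S` is fully symmetric: for every non-identity `a ∈ S` and every
`φ ∈ Sym(X_k)`, the Hanoi automorphism `φ·a` with inactive pegs `φ(Q_a)` and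
root permutation `φ ∘ σ_a ∘ φ⁻¹` again lies in `S`. -/
noncomputable def FullySymmetric {k : ℕ} (S : Set (Equiv.Perm (Word k))) : Prop :=
  ∀ a ∈ S, a ≠ 1 → ∀ φ : Equiv.Perm (Fin k), ∀ b : Equiv.Perm (Word k),
    IsHanoiWith b (φ '' inactivePegs a) →
    rootPerm b = φ * rootPerm a * φ⁻¹ → b ∈ S

/-- The family `R̲_{k,n}`: the identity together with all Hanoi automorphisms
`a` such that (1) `Q_a ⊆ {m+1, …, m+n}` for some `m`, and (2) whenever
`i ∈ Q_a` the root permutation of `a` fixes `i-1, …, i-(n-1)`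
(all peg labels mod `k`). -/
noncomputable def Runder (k n : ℕ) : Set (Equiv.Perm (Word k)) :=
  {a | a = 1 ∨ (IsHanoiAut a ∧
    (∃ m : Fin k, ∀ q ∈ inactivePegs a, ∃ t : ℕ, 1 ≤ t ∧ t ≤ n ∧
      (q : ℕ) = ((m : ℕ) + t) % k) ∧
    ∀ i ∈ inactivePegs a, ∀ x : Fin k, ∀ t : ℕ, 1 ≤ t → t ≤ n - 1 →
      ((x : ℕ) + t) % k = (i : ℕ) → rootPerm a x = x)}

/-- The family `R̄_{k,n}`: the identity together with all Hanoi automorphisms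
`a` such that (1) `Q_a ⊆ {m+1, …, m+n}` for some `m`, and (2) whenever
`i ∈ Q_a` the root permutation of `a` fixes `i+1, …, i+(n-1)`
(all peg labels mod `k`). -/
noncomputable def Rover (k n : ℕ) : Set (Equiv.Perm (Word k)) :=
  {a | a = 1 ∨ (IsHanoiAut a ∧
    (∃ m : Fin k, ∀ q ∈ inactivePegs a, ∃ t : ℕ, 1 ≤ t ∧ t ≤ n ∧
      (q : ℕ) = ((m : ℕ) + t) % k) ∧
    ∀ i ∈ inactivePegs a, ∀ x : Fin k, ∀ t : ℕ, 1 ≤ t → t ≤ n - 1 →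
      (x : ℕ) = ((i : ℕ) + t) % k → rootPerm a x = x)}

/-- The finite word `x_m … x_1` (first letter `x_m`) read off from a
left-infinite sequence `… x_2 x_1`, encoded as `x : ℕ → Fin k` with
`x s = x_{s+1}`. -/
def wordOf {k : ℕ} (x : ℕ → Fin k) (m : ℕ) : Word k := (List.range m).reverse.map x

/-! ### Auxiliary lemmas for the proof -/

section Aux

variable {k : ℕ}

lemma rootPerm_eq {e : Equiv.Perm (Word k)} {σ : Equiv.Perm (Fin k)}
    {τ : Fin k → Equiv.Perm (Word k)}
    (hs : ∀ x w, e (x :: w) = σ x :: τ x w) : rootPerm e = σ := by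
  have hf : (fun x : Fin k => ((e [x]).head?.getD x)) = ⇑σ := by
    funext x; rw [hs x []]; rfl
  have hb : Function.Bijective (fun x : Fin k => ((e [x]).head?.getD x)) := by
    rw [hf]; exact σ.bijective
  have h2 : rootPerm e = Equiv.ofBijective _ hb := by
    simp only [rootPerm, dif_pos hb]
  rw [h2]
  exact Equiv.coe_inj.mp hf

lemma sec_eq {e : Equiv.Perm (Word k)} {σ : Equiv.Perm (Fin k)}
    {τ : Fin k → Equiv.Perm (Word k)}
    (hs : ∀ x w, e (x :: w) = σ x :: τ x w) (x : Fin k) : sec e x = τ x := by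
  have hf : (fun w : Word k => (e (x :: w)).tail) = ⇑(τ x) := by
    funext w; rw [hs]; rfl
  have hb : Function.Bijective (fun w : Word k => (e (x :: w)).tail) := by
    rw [hf]; exact (τ x).bijective
  have h2 : sec e x = Equiv.ofBijective _ hb := by
    simp only [sec, dif_pos hb]
  rw [h2]
  exact Equiv.coe_inj.mp hf

/-- A permutation is *nice* if it decomposes as a root permutation and
sections. -/
def Nice (e : Equiv.Perm (Word k)) : Prop :=
  ∃ (σ : Equiv.Perm (Fin k)) (τ : Fin k → Equiv.Perm (Word k)),
    ∀ x w, e (x :: w) = σ x :: τ x w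

lemma one_spec : ∀ (x : Fin k) (w : Word k),
    (1 : Equiv.Perm (Word k)) (x :: w) = (1 : Equiv.Perm (Fin k)) x ::
      ((fun _ : Fin k => (1 : Equiv.Perm (Word k))) x) w := fun _ _ => rfl

lemma nice_one : Nice (1 : Equiv.Perm (Word k)) := ⟨1, fun _ => 1, one_spec⟩

lemma sec_one (x : Fin k) : sec (1 : Equiv.Perm (Word k)) x = 1 := sec_eq one_spec x

lemma rootPerm_one : rootPerm (1 : Equiv.Perm (Word k)) = 1 := rootPerm_eq one_spec

lemma spec_mul {g h : Equiv.Perm (Word k)} {σg σh : Equiv.Perm (Fin k)}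
    {τg τh : Fin k → Equiv.Perm (Word k)}
    (hg : ∀ x w, g (x :: w) = σg x :: τg x w)
    (hh : ∀ x w, h (x :: w) = σh x :: τh x w) :
    ∀ x w, (g * h) (x :: w) = (σg * σh) x :: ((fun x => τg (σh x) * τh x) x) w := by
  intro x w
  have h1 : (g * h) (x :: w) = g (h (x :: w)) := rfl
  rw [h1, hh, hg]; rfl

lemma nice_mul {g h : Equiv.Perm (Word k)} (hg : Nice g) (hh : Nice h) :
    Nice (g * h) := by
  obtain ⟨σg, τg, hg⟩ := hg
  obtain ⟨σh, τh, hh⟩ := hh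
  exact ⟨_, _, spec_mul hg hh⟩

lemma sec_mul {g h : Equiv.Perm (Word k)} (hg : Nice g) (hh : Nice h) (x : Fin k) :
    sec (g * h) x = sec g (rootPerm h x) * sec h x := by
  obtain ⟨σg, τg, hg⟩ := hg
  obtain ⟨σh, τh, hh⟩ := hh
  rw [sec_eq (spec_mul hg hh), rootPerm_eq hh, sec_eq hg, sec_eq hh]

lemma rootPerm_mul {g h : Equiv.Perm (Word k)} (hg : Nice g) (hh : Nice h) :
    rootPerm (g * h) = rootPerm g * rootPerm h := by
  obtain ⟨σg, τg, hg⟩ := hg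
  obtain ⟨σh, τh, hh⟩ := hh
  rw [rootPerm_eq (spec_mul hg hh), rootPerm_eq hg, rootPerm_eq hh]

lemma hanoiMove_spec (i j : Fin k) : ∀ (x : Fin k) (w : Word k),
    hanoiMove i j (x :: w) = Equiv.swap i j x ::
      ((fun x => if x = i ∨ x = j then (1 : Equiv.Perm (Word k)) else hanoiMove i j) x) w := by
  intro x w
  show hanoiMoveFun i j (x :: w) = _
  by_cases h : x = i ∨ x = j
  · simp only [hanoiMoveFun, if_pos h]
    rfl
  · push_neg at h
    simp only [hanoiMoveFun, if_neg (not_or.mpr h),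
      Equiv.swap_apply_of_ne_of_ne h.1 h.2]
    rfl

lemma nice_hanoiMove (i j : Fin k) : Nice (hanoiMove i j) :=
  ⟨_, _, hanoiMove_spec i j⟩

lemma sec_hanoiMove (i j x : Fin k) :
    sec (hanoiMove i j) x = if x = i ∨ x = j then 1 else hanoiMove i j :=
  sec_eq (hanoiMove_spec i j) x

lemma rootPerm_hanoiMove (i j : Fin k) :
    rootPerm (hanoiMove i j) = Equiv.swap i j :=
  rootPerm_eq (hanoiMove_spec i j)

lemma hanoiMove_sq (i j : Fin k) : hanoiMove i j * hanoiMove i j = 1 :=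
  Equiv.ext fun w => hanoiMoveFun_involutive i j w

lemma hanoiMove_ne_one {i j : Fin k} (hij : i ≠ j) : hanoiMove i j ≠ 1 := by
  intro he
  have h1 : hanoiMove i j [i] = [i] := by rw [he]; rfl
  have h2 : hanoiMove i j [i] = [j] := by
    show hanoiMoveFun i j [i] = [j]
    simp [hanoiMoveFun]
  rw [h2] at h1
  exact hij (List.head_eq_of_cons_eq h1).symm

lemma secW_nil (e : Equiv.Perm (Word k)) : secW e [] = e := rfl

lemma secW_cons (e : Equiv.Perm (Word k)) (x : Fin k) (v : Word k) :
    secW e (x :: v) = secW (sec e x) v := rfl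

lemma secW_one (v : Word k) : secW (1 : Equiv.Perm (Word k)) v = 1 := by
  induction v with
  | nil => rfl
  | cons x v ih => rw [secW_cons, sec_one]; exact ih

lemma secW_replicate {a : Equiv.Perm (Word k)} {c : Fin k} (h : sec a c = a) (m : ℕ) :
    secW a (List.replicate m c) = a := by
  induction m with
  | zero => rfl
  | succ m ih => rw [List.replicate_succ, secW_cons, h]; exact ih

end Aux

section Three

/-- The generating set of the 3-peg Hanoi Towers group. -/
def S3 : Set (Equiv.Perm (Word 3)) :=
  {hanoiMove (0 : Fin 3) 1, hanoiMove (0 : Fin 3) 2, hanoiMove (1 : Fin 3) 2}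

/-- The nucleus of the 3-peg Hanoi Towers group. -/
def N3 : Set (Equiv.Perm (Word 3)) :=
  {1, hanoiMove (0 : Fin 3) 1, hanoiMove (0 : Fin 3) 2, hanoiMove (1 : Fin 3) 2}

lemma nice_S3 {s : Equiv.Perm (Word 3)} (hs : s ∈ S3) : Nice s := by
  rcases hs with rfl | rfl | rfl <;> exact nice_hanoiMove _ _

lemma nice_prod {L : List (Equiv.Perm (Word 3))} (hL : ∀ s ∈ L, s ∈ S3) :
    Nice L.prod := by
  induction L with
  | nil => simpa using nice_one
  | cons s L ih =>
    rw [List.prod_cons]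
    exact nice_mul (nice_S3 (hL s (by simp))) (ih fun t ht => hL t (by simp [ht]))

lemma gen_dichotomy {s : Equiv.Perm (Word 3)} (hs : s ∈ S3) (x : Fin 3) :
    sec s x = 1 ∨ (sec s x = s ∧ rootPerm s x = x) := by
  have key : ∀ i j : Fin 3, sec (hanoiMove i j) x = 1 ∨
      (sec (hanoiMove i j) x = hanoiMove i j ∧ rootPerm (hanoiMove i j) x = x) := by
    intro i j
    rw [sec_hanoiMove, rootPerm_hanoiMove]
    by_cases h : x = i ∨ x = j
    · left; rw [if_pos h]
    · right
      push_neg at h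
      rw [if_neg (not_or.mpr h), Equiv.swap_apply_of_ne_of_ne h.1 h.2]
      exact ⟨rfl, rfl⟩
  rcases hs with rfl | rfl | rfl <;> exact key _ _

lemma sec_self_inactive {i j x : Fin 3} (hij : i ≠ j)
    (h : sec (hanoiMove i j) x = hanoiMove i j) : x ≠ i ∧ x ≠ j := by
  by_contra hc
  rw [sec_hanoiMove, if_pos (by tauto)] at h
  exact hanoiMove_ne_one hij h.symm

lemma allEq {s t : Equiv.Perm (Word 3)} {x : Fin 3} (hs : s ∈ S3) (ht : t ∈ S3)
    (h1 : sec s x = s) (h2 : sec t x = t) : s = t := by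
  rcases hs with rfl | rfl | rfl <;> rcases ht with rfl | rfl | rfl <;>
    first
      | rfl
      | (exfalso
         have a1 := sec_self_inactive (by decide) h1
         have a2 := sec_self_inactive (by decide) h2
         fin_cases x <;> simp_all)

lemma const_prod {a : Equiv.Perm (Word 3)} {L : List (Equiv.Perm (Word 3))}
    (hL : ∀ s ∈ L, s = a) (ha : a * a = 1) : L.prod = 1 ∨ L.prod = a := by
  induction L with
  | nil => left; rfl
  | cons s L ih =>
    have hs : s = a := hL s (by simp)
    rcases ih (fun t ht => hL t (by simp [ht])) with h | h
    · right; rw [List.prod_cons, h, hs, mul_one]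
    · left; rw [List.prod_cons, h, hs, ha]

lemma prod_mem_N {L : List (Equiv.Perm (Word 3))} {x : Fin 3}
    (hL : ∀ s ∈ L, s ∈ S3) (hx : ∀ s ∈ L, sec s x = s) : L.prod ∈ N3 := by
  cases L with
  | nil => left; rfl
  | cons a L =>
    have haS : a ∈ S3 := hL a (by simp)
    have haa : a * a = 1 := by
      rcases haS with rfl | rfl | rfl <;> exact hanoiMove_sq _ _
    have hconst : ∀ s ∈ a :: L, s = a := fun s hs =>
      allEq (hL s hs) haS (hx s hs) (hx a (by simp))
    rcases const_prod hconst haa with h | h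
    · rw [h]; left; rfl
    · rw [h]
      rcases haS with rfl | rfl | rfl
      · right; left; rfl
      · right; right; left; rfl
      · right; right; right; rfl

lemma sec_mem_N {g : Equiv.Perm (Word 3)} (hg : g ∈ N3) (x : Fin 3) :
    sec g x ∈ N3 := by
  rcases hg with rfl | hg
  · rw [sec_one]; left; rfl
  · have hgS : g ∈ S3 := hg
    rcases gen_dichotomy hgS x with h | ⟨h, _⟩
    · rw [h]; left; rfl
    · rw [h]; right; exact hg

lemma secW_mem_N {g : Equiv.Perm (Word 3)} (hg : g ∈ N3) (v : Word 3) :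
    secW g v ∈ N3 := by
  induction v generalizing g with
  | nil => exact hg
  | cons x v ih => rw [secW_cons]; exact ih (sec_mem_N hg x)

lemma secB (L : List (Equiv.Perm (Word 3))) (hmem : ∀ s ∈ L, s ∈ S3) (x : Fin 3) :
    (∃ L' : List (Equiv.Perm (Word 3)), (∀ s ∈ L', s ∈ S3) ∧ L'.length < L.length ∧
      sec L.prod x = L'.prod) ∨
    (rootPerm L.prod x = x ∧ sec L.prod x = L.prod ∧ ∀ s ∈ L, sec s x = s) := by
  induction L with
  | nil =>
    right
    refine ⟨?_, ?_, by simp⟩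
    · rw [List.prod_nil, rootPerm_one]; rfl
    · rw [List.prod_nil, sec_one]
  | cons s L ih =>
    have hs3 : s ∈ S3 := hmem s (by simp)
    have hL3 : ∀ t ∈ L, t ∈ S3 := fun t ht => hmem t (by simp [ht])
    have hnh : Nice L.prod := nice_prod hL3
    have hns : Nice s := nice_S3 hs3
    rcases ih hL3 with ⟨L', hL', hlen, hsec⟩ | ⟨hroot, hsec, hall⟩
    · rcases gen_dichotomy hs3 (rootPerm L.prod x) with h1 | ⟨h2, _⟩
      · left
        refine ⟨L', hL', by simp only [List.length_cons]; omega, ?_⟩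
        rw [List.prod_cons, sec_mul hns hnh, h1, hsec, one_mul]
      · left
        refine ⟨s :: L', fun t ht => ?_, by simpa using hlen, ?_⟩
        · rcases List.mem_cons.mp ht with rfl | ht
          · exact hs3
          · exact hL' t ht
        · rw [List.prod_cons, sec_mul hns hnh, h2, hsec, List.prod_cons]
    · rcases gen_dichotomy hs3 x with h1 | ⟨h2, h3⟩
      · left
        refine ⟨L, hL3, by simp, ?_⟩
        rw [List.prod_cons, sec_mul hns hnh, hroot, h1, hsec, one_mul]
      · right
        refine ⟨?_, ?_, ?_⟩
        · rw [List.prod_cons, rootPerm_mul hns hnh, Equiv.Perm.mul_apply, hroot, h3]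
        · rw [List.prod_cons, sec_mul hns hnh, hroot, h2, hsec]
        · intro t ht
          rcases List.mem_cons.mp ht with rfl | ht
          · exact h2
          · exact hall t ht

lemma mainLem : ∀ (n : ℕ) (L : List (Equiv.Perm (Word 3))), (∀ s ∈ L, s ∈ S3) →
    L.length ≤ n → ∀ v : Word 3, n ≤ v.length → secW L.prod v ∈ N3 := by
  intro n
  induction n with
  | zero =>
    intro L hL hlen v _
    have : L = [] := List.eq_nil_of_length_eq_zero (Nat.le_zero.mp hlen)
    subst this
    rw [List.prod_nil]
    exact secW_mem_N (by left; rfl) v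
  | succ n ih =>
    intro L hL hlen v hv
    cases v with
    | nil => simp at hv
    | cons x v =>
      rw [secW_cons]
      have hv' : n ≤ v.length := by simpa using Nat.le_of_succ_le_succ hv
      rcases secB L hL x with ⟨L', hL', hlen', hsec⟩ | ⟨_, hsec, hall⟩
      · rw [hsec]
        exact ih L' hL' (by omega) v hv'
      · rw [hsec]
        exact secW_mem_N (prod_mem_N hL hall) v

lemma exists_rep {g : Equiv.Perm (Word 3)} (hg : g ∈ Subgroup.closure S3) :
    ∃ L : List (Equiv.Perm (Word 3)), (∀ s ∈ L, s ∈ S3) ∧ L.prod = g := by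
  have hinv : ∀ s ∈ S3, s⁻¹ = s := by
    rintro s (rfl | rfl | rfl) <;> exact inv_eq_of_mul_eq_one_left (hanoiMove_sq _ _)
  induction hg using Subgroup.closure_induction with
  | mem s hs => exact ⟨[s], by simpa using hs, by simp⟩
  | one => exact ⟨[], by simp, rfl⟩
  | mul a b _ _ iha ihb =>
    obtain ⟨La, hLa, hpa⟩ := iha
    obtain ⟨Lb, hLb, hpb⟩ := ihb
    refine ⟨La ++ Lb, ?_, by rw [List.prod_append, hpa, hpb]⟩
    intro s hs
    rcases List.mem_append.mp hs with h | h
    · exact hLa s h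
    · exact hLb s h
  | inv a _ iha =>
    obtain ⟨L, hL, hp⟩ := iha
    refine ⟨L.reverse, fun s hs => hL s (List.mem_reverse.mp hs), ?_⟩
    have hmap : L.map (fun x => x⁻¹) = L := by
      rw [show L.map (fun x => x⁻¹) = L.map id from
        List.map_congr_left fun a ha => hinv a (hL a ha), List.map_id]
    rw [← hp, List.prod_inv_reverse, hmap]

lemma sec_gen_inactive :
    sec (hanoiMove (0 : Fin 3) 1) 2 = hanoiMove (0 : Fin 3) 1 ∧
    sec (hanoiMove (0 : Fin 3) 2) 1 = hanoiMove (0 : Fin 3) 2 ∧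
    sec (hanoiMove (1 : Fin 3) 2) 0 = hanoiMove (1 : Fin 3) 2 := by
  refine ⟨?_, ?_, ?_⟩ <;> rw [sec_hanoiMove, if_neg (by decide)]

end Three

/-- Theorem 2.1 in Grigorchuk–Šunić.
The 3-peg Hanoi Towers group `H^{(3)}`, generated by `a_{01}, a_{02}, a_{12}`,
is contracting, with nucleus `{1, a_{01}, a_{02}, a_{12}}`. -/
theorem H3_contracting_with_nucleus :
    IsContracting (Subgroup.closure
      {hanoiMove (0 : Fin 3) 1, hanoiMove (0 : Fin 3) 2, hanoiMove (1 : Fin 3) 2}) ∧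
    IsNucleus (Subgroup.closure
      {hanoiMove (0 : Fin 3) 1, hanoiMove (0 : Fin 3) 2, hanoiMove (1 : Fin 3) 2})
      {1, hanoiMove (0 : Fin 3) 1, hanoiMove (0 : Fin 3) 2, hanoiMove (1 : Fin 3) 2} := by
  show IsContracting (Subgroup.closure S3) ∧ IsNucleus (Subgroup.closure S3) N3
  have hfin : N3.Finite := (((Set.finite_singleton _).insert _).insert _).insert _
  have hsub : N3 ⊆ (Subgroup.closure S3 : Set (Equiv.Perm (Word 3))) := by
    rintro g (rfl | rfl | rfl | rfl)
    · exact one_mem _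
    · exact Subgroup.subset_closure (by left; rfl)
    · exact Subgroup.subset_closure (by right; left; rfl)
    · exact Subgroup.subset_closure (by right; right; rfl)
  have hcontr : ∀ g ∈ Subgroup.closure S3, ∃ m : ℕ, ∀ v : Word 3,
      m ≤ v.length → secW g v ∈ N3 := by
    intro g hg
    obtain ⟨L, hL, hp⟩ := exists_rep hg
    exact ⟨L.length, fun v hv => hp ▸ mainLem L.length L hL le_rfl v hv⟩
  obtain ⟨s01, s02, s12⟩ := sec_gen_inactive
  refine ⟨⟨N3, hfin, hsub, hcontr⟩, ⟨hfin, hsub, hcontr⟩, ?_⟩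
  intro N' _ _ hN'
  rintro g (rfl | rfl | rfl | rfl)
  · obtain ⟨m, hm⟩ := hN' 1 (one_mem _)
    have := hm (List.replicate m 0) (by simp)
    rwa [secW_one] at this
  · obtain ⟨m, hm⟩ := hN' (hanoiMove (0 : Fin 3) 1)
      (Subgroup.subset_closure (by left; rfl))
    have := hm (List.replicate m 2) (by simp)
    rwa [secW_replicate s01] at this
  · obtain ⟨m, hm⟩ := hN' (hanoiMove (0 : Fin 3) 2)
      (Subgroup.subset_closure (by right; left; rfl))
    have := hm (List.replicate m 1) (by simp)
    rwa [secW_replicate s02] at this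
  · obtain ⟨m, hm⟩ := hN' (hanoiMove (1 : Fin 3) 2)
      (Subgroup.subset_closure (by right; right; rfl))
    have := hm (List.replicate m 0) (by simp)
    rwa [secW_replicate s12] at this

end Hanoi
end

section
/- Let G be a k-peg Hanoi group with generating set S, and let g ∈ G with g ≠ 1 have a representation g = s_n⋯s_2s_1 with essential set Q. Then: (1) g|_j = g for every j ∈ Q; and (2) l(g|_j) < n for every j ∉ Q. -/
/-!
Common framework: automorphisms of the rooted tree `X_k^*`, root permutations,
sections, self-similar and contracting groups, Hanoi automorphisms and Hanoi
groups, following Makisumi–Stadnyk–Steinhurst, "Modified Hanoi Towers Groups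
and Limit Spaces".

A word `x_n … x_1` over the alphabet `X_k = Fin k` is encoded as the list
`[x_n, …, x_1]`, whose head `x_n` is the first letter, i.e. the letter that a
tree automorphism reads (and permutes) first.
-/

namespace Hanoi

/-!
For tree automorphisms, `(a * b)|_x = a|_{σ_b x} * b|_x`, so the section of `s_n ⋯ s_1` at `j` is
`s_n|_{y_n} ⋯ s_1|_{y_1}` with `y_i = σ_{s_{i-1} ⋯ s_1} j`. For Hanoi automorphisms each factor
`s_i|_{y_i}` is `s_i` or `1`, so the section is the product of a sublist of the representation.
While `j` is inactive for `s_1, …, s_{i-1}` we have `y_i = j`; hence for `j` in the essential set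
the section is the whole product, and otherwise some factor is dropped.
-/

lemma surjective_of_injective_of_length_eq {α : Type*} [Finite α] {f : List α → List α}
    (hlen : ∀ w, (f w).length = w.length) (hinj : Function.Injective f) :
    Function.Surjective f := by
  intro u
  let level := {w : List α | w.length = u.length}
  have hmaps : Set.MapsTo f level level := fun w hw => (hlen w).trans hw
  obtain ⟨w, -, hw⟩ := ((List.finite_length_eq α u.length).injOn_iff_bijOn_of_mapsTo hmaps).mp
    hinj.injOn |>.surjOn (show u ∈ level from rfl)
  exact ⟨w, hw⟩

section TreeAut

variable {k : ℕ}

lemma IsTreeAut.one : IsTreeAut (1 : Equiv.Perm (Word k)) :=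
  ⟨fun _ => rfl, fun _ _ _ h => h⟩

lemma IsTreeAut.mul {a b : Equiv.Perm (Word k)} (ha : IsTreeAut a) (hb : IsTreeAut b) :
    IsTreeAut (a * b) :=
  ⟨fun w => (ha.1 _).trans (hb.1 w), fun _ _ n h => ha.2 _ _ n (hb.2 _ _ n h)⟩

lemma IsTreeAut.take_apply {e : Equiv.Perm (Word k)} (he : IsTreeAut e) (w : Word k) (n : ℕ) :
    (e w).take n = e (w.take n) := by
  rw [he.2 w (w.take n) n (by rw [List.take_take, min_self]), List.take_of_length_le]
  rw [he.1, List.length_take]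
  exact min_le_left _ _

lemma IsTreeAut.inv {e : Equiv.Perm (Word k)} (he : IsTreeAut e) : IsTreeAut e⁻¹ := by
  refine ⟨fun u => by simpa using (he.1 (e⁻¹ u)).symm, fun u v n h => ?_⟩
  apply e.injective
  rw [← he.take_apply, ← he.take_apply]
  simpa using h

lemma IsTreeAut.list_prod {L : List (Equiv.Perm (Word k))} (hL : ∀ s ∈ L, IsTreeAut s) :
    IsTreeAut L.prod := by
  induction L with
  | nil => exact IsTreeAut.one
  | cons s t ih =>
    rw [List.prod_cons]
    exact (hL s List.mem_cons_self).mul (ih fun x hx => hL x (List.mem_cons_of_mem s hx))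

lemma IsTreeAut.apply_cons_eq_head_cons_tail {e : Equiv.Perm (Word k)} (he : IsTreeAut e)
    (x : Fin k) (w : Word k) :
    e (x :: w) = (e [x]).head?.getD x :: (e (x :: w)).tail := by
  have hsingle : (e (x :: w)).take 1 = e [x] := he.take_apply (x :: w) 1
  obtain ⟨a, t, hat⟩ : ∃ a t, e (x :: w) = a :: t :=
    List.exists_cons_of_length_eq_add_one (he.1 (x :: w))
  rw [hat] at hsingle ⊢
  rw [← hsingle]
  rfl

lemma IsTreeAut.bijective_rootPerm {e : Equiv.Perm (Word k)} (he : IsTreeAut e) :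
    Function.Bijective (fun x : Fin k => (e [x]).head?.getD x) := by
  have hsingle (x : Fin k) : e [x] = [(e [x]).head?.getD x] := by
    obtain ⟨a, ha⟩ := List.length_eq_one_iff.mp (he.1 [x])
    simp [ha]
  refine Finite.injective_iff_bijective.mp fun x y hxy => ?_
  have h : e [x] = e [y] := by rw [hsingle x, hsingle y, hxy]
  simpa using e.injective h

lemma IsTreeAut.bijective_sec {e : Equiv.Perm (Word k)} (he : IsTreeAut e) (x : Fin k) :
    Function.Bijective (fun w : Word k => (e (x :: w)).tail) := by
  have hinj : Function.Injective (fun w : Word k => (e (x :: w)).tail) := fun w v h => by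
    have h' : e (x :: w) = e (x :: v) := by
      rw [he.apply_cons_eq_head_cons_tail, he.apply_cons_eq_head_cons_tail x v]
      exact congrArg _ h
    simpa using e.injective h'
  refine ⟨hinj, surjective_of_injective_of_length_eq (fun w => ?_) hinj⟩
  simp [he.1 (x :: w)]

lemma IsTreeAut.apply_cons {e : Equiv.Perm (Word k)} (he : IsTreeAut e) (x : Fin k)
    (w : Word k) : e (x :: w) = rootPerm e x :: sec e x w := by
  rw [rootPerm, dif_pos he.bijective_rootPerm, sec, dif_pos (he.bijective_sec x)]
  exact he.apply_cons_eq_head_cons_tail x w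

lemma rootPerm_mul_apply {a b : Equiv.Perm (Word k)} (ha : IsTreeAut a) (hb : IsTreeAut b)
    (x : Fin k) :
    rootPerm (a * b) x = rootPerm a (rootPerm b x) := by
  have h := (ha.mul hb).apply_cons x []
  rw [Equiv.Perm.mul_apply, hb.apply_cons, ha.apply_cons] at h
  exact (List.cons.inj h).1.symm

lemma sec_mul_s4 {a b : Equiv.Perm (Word k)} (ha : IsTreeAut a) (hb : IsTreeAut b) (x : Fin k) :
    sec (a * b) x = sec a (rootPerm b x) * sec b x := by
  ext1 w
  have h := (ha.mul hb).apply_cons x w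
  rw [Equiv.Perm.mul_apply, hb.apply_cons, ha.apply_cons] at h
  exact (List.cons.inj h).2.symm

lemma rootPerm_one_apply (x : Fin k) : rootPerm (1 : Equiv.Perm (Word k)) x = x :=
  (List.cons.inj (IsTreeAut.one.apply_cons x [])).1.symm

end TreeAut

section HanoiAut

variable {k : ℕ}

lemma rootPerm_inv_rootPerm {a : Equiv.Perm (Word k)} (ha : IsTreeAut a) (x : Fin k) :
    rootPerm a⁻¹ (rootPerm a x) = x := by
  rw [← rootPerm_mul_apply ha.inv ha, inv_mul_cancel, rootPerm_one_apply]

lemma sec_inv_rootPerm {a : Equiv.Perm (Word k)} (ha : IsTreeAut a) (x : Fin k) :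
    sec a⁻¹ (rootPerm a x) = (sec a x)⁻¹ := by
  refine eq_inv_of_mul_eq_one_left ?_
  rw [← sec_mul_s4 ha.inv ha, inv_mul_cancel, sec_one]

lemma IsHanoiWith.inv {a : Equiv.Perm (Word k)} {Q : Set (Fin k)} (h : IsHanoiWith a Q) :
    IsHanoiWith a⁻¹ Q := by
  obtain ⟨ht, hactive, hinactive, hfix⟩ := h
  refine ⟨ht.inv, fun i hi => ?_, fun j hj => ?_, fun j hj => ?_⟩
  · obtain ⟨x, rfl⟩ := (rootPerm a).surjective i
    have hx : x ∉ Q := fun hx => hi (by rwa [hfix x hx])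
    rw [sec_inv_rootPerm ht, hactive x hx, inv_one]
  · rw [← hfix j hj, sec_inv_rootPerm ht, hinactive j hj]
  · conv_lhs => rw [← hfix j hj]
    exact rootPerm_inv_rootPerm ht j

lemma IsHanoiAut.of_inv {a : Equiv.Perm (Word k)} (h : IsHanoiAut a⁻¹) : IsHanoiAut a :=
  let ⟨Q, hQ⟩ := h
  ⟨Q, by simpa using hQ.inv⟩

lemma IsHanoiAut.isHanoiWith_inactivePegs {a : Equiv.Perm (Word k)} (h : IsHanoiAut a) :
    IsHanoiWith a (inactivePegs a) := by
  by_cases ha : a = 1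
  · subst ha
    simp only [inactivePegs, if_true]
    exact ⟨IsTreeAut.one, fun i hi => absurd trivial hi, fun j _ => sec_one j,
      fun j _ => rootPerm_one_apply j⟩
  · rw [inactivePegs, if_neg ha, dif_pos (show ∃ Q, IsHanoiWith a Q from h)]
    exact h.choose_spec

lemma IsHanoiAut.isTreeAut {a : Equiv.Perm (Word k)} (h : IsHanoiAut a) : IsTreeAut a :=
  h.isHanoiWith_inactivePegs.1

end HanoiAut

section Representation

variable {k : ℕ} {L : List (Equiv.Perm (Word k))} {j : Fin k}

lemma mem_essSet_iff : j ∈ essSet L ↔ ∀ s ∈ L, j ∈ inactivePegs s :=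
  Set.mem_iInter₂

lemma mem_essSet_cons {s : Equiv.Perm (Word k)} :
    j ∈ essSet (s :: L) ↔ j ∈ inactivePegs s ∧ j ∈ essSet L := by
  simp only [mem_essSet_iff, List.forall_mem_cons]

lemma rootPerm_prod_of_mem_essSet (hL : ∀ s ∈ L, IsHanoiAut s) (hj : j ∈ essSet L) :
    rootPerm L.prod j = j := by
  induction L with
  | nil => exact rootPerm_one_apply j
  | cons s t ih =>
    rw [List.forall_mem_cons] at hL
    rw [mem_essSet_cons] at hj
    rw [List.prod_cons, rootPerm_mul_apply hL.1.isTreeAut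
      (IsTreeAut.list_prod fun x hx => (hL.2 x hx).isTreeAut), ih hL.2 hj.2,
      hL.1.isHanoiWith_inactivePegs.2.2.2 j hj.1]

lemma sec_prod_of_mem_essSet (hL : ∀ s ∈ L, IsHanoiAut s) (hj : j ∈ essSet L) :
    sec L.prod j = L.prod := by
  induction L with
  | nil => exact sec_one j
  | cons s t ih =>
    rw [List.forall_mem_cons] at hL
    rw [mem_essSet_cons] at hj
    rw [List.prod_cons, sec_mul_s4 hL.1.isTreeAut
      (IsTreeAut.list_prod fun x hx => (hL.2 x hx).isTreeAut),
      rootPerm_prod_of_mem_essSet hL.2 hj.2, ih hL.2 hj.2,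
      hL.1.isHanoiWith_inactivePegs.2.2.1 j hj.1]

lemma exists_sublist_prod_eq_sec (hL : ∀ s ∈ L, IsHanoiAut s) (j : Fin k) :
    ∃ L' : List (Equiv.Perm (Word k)), List.Sublist L' L ∧ L'.prod = sec L.prod j ∧
      (j ∉ essSet L → L'.length < L.length) := by
  induction L with
  | nil =>
    exact ⟨[], List.Sublist.slnil, (sec_one j).symm, fun hj => absurd (by simp [essSet]) hj⟩
  | cons s t ih =>
    rw [List.forall_mem_cons] at hL
    obtain ⟨hs, ht⟩ := hL
    obtain ⟨t', ht't, hprod, hlen⟩ := ih ht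
    have hsec : sec (s :: t).prod j = sec s (rootPerm t.prod j) * sec t.prod j :=
      sec_mul_s4 hs.isTreeAut (IsTreeAut.list_prod fun x hx => (ht x hx).isTreeAut) j
    obtain ⟨-, hactive, hinactive, -⟩ := hs.isHanoiWith_inactivePegs
    by_cases hjt : j ∈ essSet t
    · rw [rootPerm_prod_of_mem_essSet ht hjt, sec_prod_of_mem_essSet ht hjt] at hsec
      by_cases hjs : j ∈ inactivePegs s
      · exact ⟨s :: t, List.Sublist.refl _, by rw [hsec, hinactive j hjs, List.prod_cons],
          fun hj => absurd (mem_essSet_cons.mpr ⟨hjs, hjt⟩) hj⟩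
      · exact ⟨t, List.sublist_cons_self s t, by rw [hsec, hactive j hjs, one_mul],
          fun _ => Nat.lt_succ_self _⟩
    · have hlt := hlen hjt
      by_cases hy : rootPerm t.prod j ∈ inactivePegs s
      · exact ⟨s :: t', ht't.cons_cons s, by rw [hsec, hinactive _ hy, List.prod_cons, hprod],
          fun _ => by simpa using hlt⟩
      · exact ⟨t', ht't.cons s, by rw [hsec, hactive _ hy, one_mul, hprod],
          fun _ => Nat.lt_succ_of_lt hlt⟩

end Representation

theorem length_lemma_general {k : ℕ} (S : Set (Equiv.Perm (Word k)))
    (hS : ∀ a ∈ S, IsHanoiAut a)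
    (g : Equiv.Perm (Word k))
    (L : List (Equiv.Perm (Word k))) (hL : IsRepOf S L g) :
    (∀ j ∈ essSet L, sec g j = g) ∧
      ∀ j : Fin k, j ∉ essSet L → repLength S (sec g j) < L.length := by
  obtain ⟨hgen, rfl⟩ := hL
  have hHanoi : ∀ s ∈ L, IsHanoiAut s := fun s hs =>
    (hgen s hs).elim (hS s) fun hinv => (hS _ hinv).of_inv
  refine ⟨fun j hj => sec_prod_of_mem_essSet hHanoi hj, fun j hj => ?_⟩
  obtain ⟨L', hsub, hprod, hlen⟩ := exists_sublist_prod_eq_sec hHanoi j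
  calc repLength S (sec L.prod j) ≤ L'.length :=
        Nat.sInf_le ⟨L', ⟨fun s hs => hgen s (hsub.subset hs), hprod⟩, rfl⟩
    _ < L.length := hlen hj

/-- Lemma 4.1, length lemma.
Let `G` be a `k`-peg Hanoi group with generating set `S` and let `g ≠ 1` have
a representation `g = s_n ⋯ s_2 s_1` with essential set `Q`.  Then
(1) `g|_j = g` for every `j ∈ Q`, and (2) `l(g|_j) < n` for every `j ∉ Q`. -/
theorem length_lemma {k : ℕ} (S : Set (Equiv.Perm (Word k)))
    (hS1 : (1 : Equiv.Perm (Word k)) ∈ S) (hS : ∀ a ∈ S, IsHanoiAut a)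
    (g : Equiv.Perm (Word k)) (hg : g ≠ 1)
    (L : List (Equiv.Perm (Word k))) (hL : IsRepOf S L g) :
    (∀ j ∈ essSet L, sec g j = g) ∧
      ∀ j : Fin k, j ∉ essSet L → repLength S (sec g j) < L.length :=
  length_lemma_general S hS g L hL

end Hanoi
end
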